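/- Assume in addition that J₀ ≥ 0 and g_j ≥ 0 everywhere for j = 1,…,m, and that for each j = 1,…,m the constant δ_j := I₀·e^{−2k₀ω}/(1 − e^{−k₀ω}) − m₀/k₀ − m_j/k_j is positive, and that g_j(z) > 0 for every z > 0. Then every bounded measurable ξ : ℝ → ℝ^{m+1} with ξ = Tξ satisfies, for each j = 1,…,m and all t ∈ ℝ: ξ_j(t) ≥ ḡ_j/k_j > 0, where ḡ_j := min{ g_j(z) : δ_j ≤ z ≤ M₀ + m_j/k_j } and M₀ := m₀/k₀ + (I₀ + m_J)·e^{k₀ω}/(1 − e^{−k₀ω}) (the minimum exists and is positive since g_j is Lipschitz, hence continuous, and δ_j > 0). -/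

import Mathlib

/-!
For `j ≠ 0` the fixed-point equation makes `ξ_j` an exponentially weighted average of
`g_j(ξ₀ − ξ_j)`, so `|ξ_j| ≤ m_j/k_j`. In `ξ₀` every period of length `ω` contributes one impulse
of size between `I₀` and `I₀ + m_J`; comparing the impulse sum with geometric series in
`e^{−k₀ω}` traps `ξ₀ − ξ_j` in `[δ_j, M₀ + m_j/k_j]`. There `g_j` is at least `ḡ_j > 0`, and
integrating this against `e^{−k_j(t−s)}` gives `ξ_j ≥ ḡ_j/k_j`.
-/

/-- The Euclidean norm on `Fin n → ℝ`. -/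
noncomputable def eNorm {n : ℕ} (v : Fin n → ℝ) : ℝ := Real.sqrt (∑ j, v j ^ 2)

/-- The operator `T` of the paper: coordinate `0` (the systemic arterial pressure) gets
`(Tφ)₀(t) = −∫_{−∞}^t e^{−k₀(t−s)} g₀(φ₀(s)−φ₁(s),…,φ₀(s)−φ_m(s)) ds
  + Σ_{θ_i < t} e^{−k₀(t−θ_i)} (I₀ + J₀(φ₀(θ_i)))`,
and the compartment coordinates `j = 1,…,m` (nonzero indices of `Fin (m+1)`) get
`(Tφ)_j(t) = ∫_{−∞}^t e^{−k_j(t−s)} g_j(φ₀(s)−φ_j(s)) ds`. -/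
noncomputable def Tmap (m : ℕ) (θ : ℤ → ℝ) (k : Fin (m + 1) → ℝ) (I₀ : ℝ)
    (g₀ : (Fin m → ℝ) → ℝ) (g : Fin (m + 1) → ℝ → ℝ) (J₀ : ℝ → ℝ)
    (φ : ℝ → Fin (m + 1) → ℝ) : ℝ → Fin (m + 1) → ℝ := fun t j =>
  if j = 0 then
    -(∫ s in Set.Iic t, Real.exp (-(k 0) * (t - s)) * g₀ (fun i => φ s 0 - φ s i.succ))
      + ∑' i : ℤ, (if θ i < t then Real.exp (-(k 0) * (t - θ i)) * (I₀ + J₀ (φ (θ i) 0)) else 0)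
  else
    ∫ s in Set.Iic t, Real.exp (-(k j) * (t - s)) * g j (φ s 0 - φ s j)

/-- The set `Ω`: bounded measurable functions `φ : ℝ → ℝ^{m+1}` with
`|φ₀(t)| ≤ m₀/k₀ + (I₀ + m_J)·e^{k₀ω}/(1 − e^{−k₀ω})` and `|φ_j(t)| ≤ m_j/k_j`. -/
def OmegaSet (m : ℕ) (ω : ℝ) (k mc : Fin (m + 1) → ℝ) (I₀ mJ : ℝ) :
    Set (ℝ → Fin (m + 1) → ℝ) :=
  {φ | Measurable φ ∧ (∃ B, ∀ t, eNorm (φ t) ≤ B) ∧ ∀ t,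
    |φ t 0| ≤ mc 0 / k 0 + (I₀ + mJ) * Real.exp (k 0 * ω) / (1 - Real.exp (-(k 0) * ω)) ∧
    ∀ j, j ≠ 0 → |φ t j| ≤ mc j / k j}

open MeasureTheory Set Real Filter

noncomputable def expDecayIntegral (κ : ℝ) (u : ℝ → ℝ) (t : ℝ) : ℝ :=
  ∫ s in Iic t, exp (-κ * (t - s)) * u s

section ExpDecay

variable {κ : ℝ}

lemma exp_neg_mul_sub (κ t s : ℝ) : exp (-κ * (t - s)) = exp (-κ * t) * exp (κ * s) := by
  rw [← exp_add]; ring_nf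

lemma integrableOn_exp_decay (hκ : 0 < κ) (t : ℝ) :
    IntegrableOn (fun s => exp (-κ * (t - s))) (Iic t) := by
  simp_rw [exp_neg_mul_sub]
  exact (integrableOn_exp_mul_Iic hκ t).const_mul _

lemma integral_exp_decay (hκ : 0 < κ) (t : ℝ) : ∫ s in Iic t, exp (-κ * (t - s)) = 1 / κ := by
  simp_rw [exp_neg_mul_sub]
  rw [integral_const_mul, integral_exp_mul_Iic hκ, mul_div_assoc', ← exp_add]
  simp

lemma abs_expDecayIntegral_le (hκ : 0 < κ) {u : ℝ → ℝ} {c : ℝ} (hu : ∀ s, |u s| ≤ c) (t : ℝ) :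
    |expDecayIntegral κ u t| ≤ c / κ := by
  rw [expDecayIntegral, ← norm_eq_abs]
  calc ‖∫ s in Iic t, exp (-κ * (t - s)) * u s‖ ≤ ∫ s in Iic t, c * exp (-κ * (t - s)) := by
        refine norm_integral_le_of_norm_le ((integrableOn_exp_decay hκ t).const_mul c)
          (Eventually.of_forall fun s => ?_)
        rw [norm_mul, norm_of_nonneg (exp_pos _).le, mul_comm]
        exact mul_le_mul_of_nonneg_right (hu s) (exp_pos _).le
    _ = c / κ := by rw [integral_const_mul, integral_exp_decay hκ, mul_one_div]

lemma div_le_expDecayIntegral (hκ : 0 < κ) {u : ℝ → ℝ} {c S : ℝ} (hmeas : Measurable u)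
    (hu : ∀ s, |u s| ≤ c) (hS : ∀ s, S ≤ u s) (t : ℝ) :
    S / κ ≤ expDecayIntegral κ u t := by
  have hint : IntegrableOn (fun s => exp (-κ * (t - s)) * u s) (Iic t) := by
    refine Integrable.mono' ((integrableOn_exp_decay hκ t).const_mul c) (by fun_prop)
      (Eventually.of_forall fun s => ?_)
    rw [norm_mul, norm_of_nonneg (exp_pos _).le, mul_comm c]
    exact mul_le_mul_of_nonneg_left (hu s) (exp_pos _).le
  calc S / κ = ∫ s in Iic t, exp (-κ * (t - s)) * S := by
        rw [integral_mul_const, integral_exp_decay hκ, one_div_mul_eq_div]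
    _ ≤ expDecayIntegral κ u t :=
        setIntegral_mono ((integrableOn_exp_decay hκ t).mul_const S) hint
          fun s => mul_le_mul_of_nonneg_left (hS s) (exp_pos _).le

end ExpDecay

section GeometricComparison

lemma hasSum_comp_sub_natCast_iff {α : Type*} [AddCommMonoid α] [TopologicalSpace α]
    {f : ℤ → α} {N : ℤ} {a : α} (hf : ∀ i, N < i → f i = 0) :
    HasSum (fun n : ℕ => f (N - n)) a ↔ HasSum f a := by
  refine Function.Injective.hasSum_iff (fun p q h => by simpa using h) fun i hi => hf i ?_
  by_contra! h
  exact hi ⟨(N - i).toNat, by simp [Int.toNat_of_nonneg (sub_nonneg.mpr h)]⟩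

variable {f : ℤ → ℝ} {N : ℤ} {C r : ℝ}

lemma summable_of_le_geometric (hf0 : ∀ i, 0 ≤ f i) (hf : ∀ i, N < i → f i = 0) (hr0 : 0 ≤ r)
    (hr1 : r < 1) (hle : ∀ n : ℕ, f (N - n) ≤ C * r ^ n) : Summable f :=
  ((hasSum_comp_sub_natCast_iff hf).mp ((summable_geometric_of_lt_one hr0 hr1).mul_left C
    |>.of_nonneg_of_le (fun _ => hf0 _) hle).hasSum).summable

lemma tsum_le_of_le_geometric (hf0 : ∀ i, 0 ≤ f i) (hf : ∀ i, N < i → f i = 0) (hr0 : 0 ≤ r)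
    (hr1 : r < 1) (hle : ∀ n : ℕ, f (N - n) ≤ C * r ^ n) : ∑' i, f i ≤ C / (1 - r) := by
  have hgeom := (summable_geometric_of_lt_one hr0 hr1).mul_left C
  have hcomp := hgeom.of_nonneg_of_le (fun _ => hf0 _) hle
  calc ∑' i, f i = ∑' n : ℕ, f (N - n) :=
        ((hasSum_comp_sub_natCast_iff hf).mp hcomp.hasSum).tsum_eq
    _ ≤ ∑' n : ℕ, C * r ^ n := hcomp.tsum_le_tsum hle hgeom
    _ = C / (1 - r) := by rw [tsum_mul_left, tsum_geometric_of_lt_one hr0 hr1, div_eq_mul_inv]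

lemma div_one_sub_le_tsum_of_geometric_le (hf0 : ∀ i, 0 ≤ f i) (hs : Summable f)
    (hr0 : 0 ≤ r) (hr1 : r < 1) (hle : ∀ n : ℕ, C * r ^ n ≤ f (N - n)) :
    C / (1 - r) ≤ ∑' i, f i := by
  calc C / (1 - r) = ∑' n : ℕ, C * r ^ n := by
        rw [tsum_mul_left, tsum_geometric_of_lt_one hr0 hr1, div_eq_mul_inv]
    _ ≤ ∑' i, f i := ((summable_geometric_of_lt_one hr0 hr1).mul_left C).tsum_le_tsum_of_inj
        (fun n : ℕ => N - n) (fun p q h => by simpa using h) (fun i _ => hf0 i) hle hs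

end GeometricComparison

noncomputable def impulseTerm (κ : ℝ) (θ a : ℤ → ℝ) (t : ℝ) (i : ℤ) : ℝ :=
  if θ i < t then exp (-κ * (t - θ i)) * a i else 0

noncomputable def impulseSum (κ : ℝ) (θ a : ℤ → ℝ) (t : ℝ) : ℝ :=
  ∑' i, impulseTerm κ θ a t i

section Impulses

variable {κ ω t A B : ℝ} {θ a : ℤ → ℝ}

lemma floor_div_mul_le_and_lt (hω : 0 < ω) (t : ℝ) :
    (⌊t / ω⌋ : ℝ) * ω ≤ t ∧ t < (⌊t / ω⌋ + 1) * ω :=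
  ⟨(le_div_iff₀ hω).mp (Int.floor_le _), (div_lt_iff₀ hω).mp (Int.lt_floor_add_one _)⟩

lemma impulseTerm_eq_zero_of_floor_lt (hω : 0 < ω)
    (hθ : ∀ i : ℤ, (i : ℝ) * ω ≤ θ i ∧ θ i < ((i : ℝ) + 1) * ω) {i : ℤ} (hi : ⌊t / ω⌋ < i) :
    impulseTerm κ θ a t i = 0 := by
  have hle : (⌊t / ω⌋ : ℝ) + 1 ≤ i := by exact_mod_cast hi
  have ht := (floor_div_mul_le_and_lt hω t).2
  have hθi := (hθ i).1
  rw [impulseTerm, if_neg]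
  nlinarith

/- An impulse `n` periods before the one containing `t` fired at least `(n - 1)ω` before `t`,
whence the factor `e^{κω}`. -/
lemma impulseTerm_floor_sub_le (hω : 0 < ω)
    (hθ : ∀ i : ℤ, (i : ℝ) * ω ≤ θ i ∧ θ i < ((i : ℝ) + 1) * ω) (hκ : 0 < κ)
    (ha : ∀ i, 0 ≤ a i ∧ a i ≤ B) (n : ℕ) :
    impulseTerm κ θ a t (⌊t / ω⌋ - n) ≤ B * exp (κ * ω) * exp (-κ * ω) ^ n := by
  set i := ⌊t / ω⌋ - n with hi
  have hB : 0 ≤ B := (ha i).1.trans (ha i).2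
  rw [impulseTerm]
  split_ifs with hti
  · have hθi := (hθ i).2
    have hN := (floor_div_mul_le_and_lt hω t).1
    push_cast [hi] at hθi
    have hexp : exp (-κ * (t - θ i)) ≤ exp (κ * ω) * exp (-κ * ω) ^ n := by
      rw [← exp_nat_mul, ← exp_add, exp_le_exp]
      nlinarith
    rw [mul_comm B, mul_right_comm]
    exact mul_le_mul hexp (ha i).2 (ha i).1 (by positivity)
  · positivity

/- The impulse `n + 1` periods before the one containing `t` fired before `t`, and at most
`(n + 2)ω` before it, whence the factor `e^{−2κω}`. -/
lemma le_impulseTerm_floor_sub_one_sub (hω : 0 < ω)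
    (hθ : ∀ i : ℤ, (i : ℝ) * ω ≤ θ i ∧ θ i < ((i : ℝ) + 1) * ω) (hκ : 0 < κ) (ha : ∀ i, A ≤ a i)
    (hA : 0 ≤ A) (n : ℕ) :
    A * exp (-(2 * κ * ω)) * exp (-κ * ω) ^ n ≤ impulseTerm κ θ a t (⌊t / ω⌋ - 1 - n) := by
  set i := ⌊t / ω⌋ - 1 - n with hi
  have hθi := hθ i
  have hN := floor_div_mul_le_and_lt hω t
  push_cast [hi] at hθi
  have hti : θ i < t := by nlinarith [(n.cast_nonneg : (0 : ℝ) ≤ n)]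
  have hexp : exp (-(2 * κ * ω)) * exp (-κ * ω) ^ n ≤ exp (-κ * (t - θ i)) := by
    rw [← exp_nat_mul, ← exp_add, exp_le_exp]
    nlinarith
  rw [impulseTerm, if_pos hti, mul_assoc, mul_comm A]
  exact mul_le_mul hexp (ha i) hA (exp_pos _).le

lemma impulseTerm_nonneg (ha : ∀ i, 0 ≤ a i) (i : ℤ) : 0 ≤ impulseTerm κ θ a t i := by
  unfold impulseTerm
  split_ifs
  · exact mul_nonneg (exp_pos _).le (ha i)
  · exact le_rfl

lemma exp_neg_mul_lt_one (hκ : 0 < κ) (hω : 0 < ω) : exp (-κ * ω) < 1 :=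
  exp_lt_one_iff.mpr (mul_neg_of_neg_of_pos (neg_neg_of_pos hκ) hω)

lemma summable_impulseTerm (hω : 0 < ω)
    (hθ : ∀ i : ℤ, (i : ℝ) * ω ≤ θ i ∧ θ i < ((i : ℝ) + 1) * ω) (hκ : 0 < κ)
    (ha : ∀ i, 0 ≤ a i ∧ a i ≤ B) : Summable (impulseTerm κ θ a t) :=
  summable_of_le_geometric (impulseTerm_nonneg fun i => (ha i).1)
    (fun _ => impulseTerm_eq_zero_of_floor_lt hω hθ) (exp_pos _).le (exp_neg_mul_lt_one hκ hω)
    (impulseTerm_floor_sub_le hω hθ hκ ha)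

lemma impulseSum_le (hω : 0 < ω)
    (hθ : ∀ i : ℤ, (i : ℝ) * ω ≤ θ i ∧ θ i < ((i : ℝ) + 1) * ω) (hκ : 0 < κ)
    (ha : ∀ i, 0 ≤ a i ∧ a i ≤ B) : impulseSum κ θ a t ≤ B * exp (κ * ω) / (1 - exp (-κ * ω)) :=
  tsum_le_of_le_geometric (impulseTerm_nonneg fun i => (ha i).1)
    (fun _ => impulseTerm_eq_zero_of_floor_lt hω hθ) (exp_pos _).le (exp_neg_mul_lt_one hκ hω)
    (impulseTerm_floor_sub_le hω hθ hκ ha)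

lemma le_impulseSum (hω : 0 < ω)
    (hθ : ∀ i : ℤ, (i : ℝ) * ω ≤ θ i ∧ θ i < ((i : ℝ) + 1) * ω) (hκ : 0 < κ) (hA : 0 ≤ A)
    (ha : ∀ i, A ≤ a i ∧ a i ≤ B) :
    A * exp (-(2 * κ * ω)) / (1 - exp (-κ * ω)) ≤ impulseSum κ θ a t :=
  div_one_sub_le_tsum_of_geometric_le (impulseTerm_nonneg fun i => hA.trans (ha i).1)
    (summable_impulseTerm hω hθ hκ fun i => ⟨hA.trans (ha i).1, (ha i).2⟩) (exp_pos _).le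
    (exp_neg_mul_lt_one hκ hω) (le_impulseTerm_floor_sub_one_sub hω hθ hκ (fun i => (ha i).1) hA)

end Impulses

section Tmap

variable {m : ℕ} {θ : ℤ → ℝ} {k : Fin (m + 1) → ℝ} {I₀ : ℝ} {g₀ : (Fin m → ℝ) → ℝ}
  {g : Fin (m + 1) → ℝ → ℝ} {J₀ : ℝ → ℝ} {φ : ℝ → Fin (m + 1) → ℝ}

lemma Tmap_apply_zero (t : ℝ) : Tmap m θ k I₀ g₀ g J₀ φ t 0 =
    -expDecayIntegral (k 0) (fun s => g₀ fun i => φ s 0 - φ s i.succ) t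
      + impulseSum (k 0) θ (fun i => I₀ + J₀ (φ (θ i) 0)) t :=
  if_pos rfl

lemma Tmap_apply_of_ne_zero {j : Fin (m + 1)} (hj : j ≠ 0) (t : ℝ) :
    Tmap m θ k I₀ g₀ g J₀ φ t j = expDecayIntegral (k j) (fun s => g j (φ s 0 - φ s j)) t :=
  if_neg hj

lemma abs_Tmap_apply_le {j : Fin (m + 1)} (hj : j ≠ 0) (hk : 0 < k j) {c : ℝ}
    (hg : ∀ a, |g j a| ≤ c) (t : ℝ) : |Tmap m θ k I₀ g₀ g J₀ φ t j| ≤ c / k j := by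
  rw [Tmap_apply_of_ne_zero hj]
  exact abs_expDecayIntegral_le hk (fun s => hg _) t

lemma div_le_Tmap_apply {j : Fin (m + 1)} (hj : j ≠ 0) (hk : 0 < k j) (hφ : Measurable φ)
    (hg : Continuous (g j)) {c S : ℝ} (hgbd : ∀ a, |g j a| ≤ c)
    (hS : ∀ s, S ≤ g j (φ s 0 - φ s j)) (t : ℝ) : S / k j ≤ Tmap m θ k I₀ g₀ g J₀ φ t j := by
  rw [Tmap_apply_of_ne_zero hj]
  exact div_le_expDecayIntegral hk (by fun_prop) (fun s => hgbd _) hS t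

variable {ω c mJ : ℝ}

lemma Tmap_apply_zero_le (hω : 0 < ω)
    (hθ : ∀ i : ℤ, (i : ℝ) * ω ≤ θ i ∧ θ i < ((i : ℝ) + 1) * ω) (hk : 0 < k 0) (hI : 0 ≤ I₀)
    (hJpos : ∀ a, 0 ≤ J₀ a) (hJbd : ∀ a, |J₀ a| ≤ mJ) (hg₀ : ∀ z, |g₀ z| ≤ c) (t : ℝ) :
    Tmap m θ k I₀ g₀ g J₀ φ t 0 ≤
      c / k 0 + (I₀ + mJ) * exp (k 0 * ω) / (1 - exp (-(k 0) * ω)) := by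
  have hint := abs_le.mp (abs_expDecayIntegral_le (u := fun s => g₀ fun i => φ s 0 - φ s i.succ)
    hk (fun s => hg₀ _) t)
  have hsum := impulseSum_le hω hθ hk (t := t) (a := fun i => I₀ + J₀ (φ (θ i) 0))
    fun i => ⟨add_nonneg hI (hJpos _), add_le_add le_rfl (le_of_abs_le (hJbd _))⟩
  rw [Tmap_apply_zero]
  linarith [hint.1]

lemma le_Tmap_apply_zero (hω : 0 < ω)
    (hθ : ∀ i : ℤ, (i : ℝ) * ω ≤ θ i ∧ θ i < ((i : ℝ) + 1) * ω) (hk : 0 < k 0) (hI : 0 ≤ I₀)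
    (hJpos : ∀ a, 0 ≤ J₀ a) (hJbd : ∀ a, |J₀ a| ≤ mJ) (hg₀ : ∀ z, |g₀ z| ≤ c) (t : ℝ) :
    I₀ * exp (-(2 * k 0 * ω)) / (1 - exp (-(k 0) * ω)) - c / k 0 ≤
      Tmap m θ k I₀ g₀ g J₀ φ t 0 := by
  have hint := abs_le.mp (abs_expDecayIntegral_le (u := fun s => g₀ fun i => φ s 0 - φ s i.succ)
    hk (fun s => hg₀ _) t)
  have hsum := le_impulseSum hω hθ hk hI (t := t) (a := fun i => I₀ + J₀ (φ (θ i) 0))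
    fun i => ⟨le_add_of_nonneg_right (hJpos _), add_le_add le_rfl (le_of_abs_le (hJbd _))⟩
  rw [Tmap_apply_zero]
  linarith [hint.2]

end Tmap

lemma IsCompact.sInf_image_pos {α : Type*} [TopologicalSpace α] {K : Set α} {f : α → ℝ}
    (hK : IsCompact K) (hne : K.Nonempty) (hf : ContinuousOn f K) (hpos : ∀ x ∈ K, 0 < f x) :
    0 < sInf (f '' K) := by
  obtain ⟨x, hx, hfx⟩ := (hK.image_of_continuousOn hf).sInf_mem (hne.image f)
  exact hfx ▸ hpos x hx

theorem stmt10
    (m : ℕ) (ω : ℝ) (hω : 0 < ω) (θ : ℤ → ℝ)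
    (hθ : ∀ i : ℤ, (i : ℝ) * ω ≤ θ i ∧ θ i < ((i : ℝ) + 1) * ω)
    (k : Fin (m + 1) → ℝ) (hk : ∀ j, 0 < k j) (I₀ : ℝ) (hI : 0 < I₀)
    (g₀ : (Fin m → ℝ) → ℝ) (g : Fin (m + 1) → ℝ → ℝ) (J₀ : ℝ → ℝ)
    (l : Fin (m + 1) → ℝ) (mc : Fin (m + 1) → ℝ) (mJ : ℝ)
    (hglip : ∀ j, j ≠ 0 → ∀ a b : ℝ, |g j a - g j b| ≤ l j * |a - b|)
    (hg₀bd : ∀ z, |g₀ z| ≤ mc 0)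
    (hgbd : ∀ j, j ≠ 0 → ∀ a, |g j a| ≤ mc j)
    (hJbd : ∀ a, |J₀ a| ≤ mJ)
    (hJpos : ∀ a : ℝ, 0 ≤ J₀ a)
    (hgpos' : ∀ j, j ≠ 0 → ∀ z : ℝ, 0 < z → 0 < g j z)
    (hδ : ∀ j : Fin (m + 1), j ≠ 0 →
      0 < I₀ * Real.exp (-(2 * k 0 * ω)) / (1 - Real.exp (-(k 0) * ω)) - mc 0 / k 0 - mc j / k j) :
    ∀ ξ : ℝ → Fin (m + 1) → ℝ,
      (Measurable ξ ∧ (∃ B, ∀ t, eNorm (ξ t) ≤ B) ∧ ∀ t, ξ t = Tmap m θ k I₀ g₀ g J₀ ξ t) →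
      ∀ j, j ≠ 0 → ∀ t : ℝ,
        sInf (g j '' Set.Icc (I₀ * Real.exp (-(2 * k 0 * ω)) / (1 - Real.exp (-(k 0) * ω)) - mc 0 / k 0 - mc j / k j)
            ((mc 0 / k 0 + (I₀ + mJ) * Real.exp (k 0 * ω) / (1 - Real.exp (-(k 0) * ω))) + mc j / k j)) / k j ≤ ξ t j ∧
        0 < sInf (g j '' Set.Icc (I₀ * Real.exp (-(2 * k 0 * ω)) / (1 - Real.exp (-(k 0) * ω)) - mc 0 / k 0 - mc j / k j)
            ((mc 0 / k 0 + (I₀ + mJ) * Real.exp (k 0 * ω) / (1 - Real.exp (-(k 0) * ω))) + mc j / k j)) / k j := by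
  rintro ξ ⟨hξ, -, hfix⟩ j hj t
  set δ := I₀ * Real.exp (-(2 * k 0 * ω)) / (1 - Real.exp (-(k 0) * ω)) - mc 0 / k 0 - mc j / k j
  set M := (mc 0 / k 0 + (I₀ + mJ) * Real.exp (k 0 * ω) / (1 - Real.exp (-(k 0) * ω))) + mc j / k j
  have hg : Continuous (g j) := (LipschitzWith.of_dist_le' fun a b => by
    simpa only [Real.dist_eq] using hglip j hj a b).continuous
  have hdiff : ∀ s, ξ s 0 - ξ s j ∈ Icc δ M := by
    intro s
    have hlo := le_Tmap_apply_zero (φ := ξ) (g := g) hω hθ (hk 0) hI.le hJpos hJbd hg₀bd s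
    have hup := Tmap_apply_zero_le (φ := ξ) (g := g) hω hθ (hk 0) hI.le hJpos hJbd hg₀bd s
    have hξj : |ξ s j| ≤ mc j / k j := hfix s ▸ abs_Tmap_apply_le hj (hk j) (hgbd j hj) s
    rw [← hfix s] at hlo hup
    exact ⟨by linarith [(abs_le.mp hξj).2], by linarith [(abs_le.mp hξj).1]⟩
  have hK : IsCompact (Icc δ M) := isCompact_Icc
  refine ⟨?_, div_pos (hK.sInf_image_pos ⟨_, hdiff t⟩ hg.continuousOn
    fun z hz => hgpos' j hj z ((hδ j hj).trans_le hz.1)) (hk j)⟩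
  rw [hfix t]
  exact div_le_Tmap_apply hj (hk j) hξ hg (hgbd j hj)
    (fun s => csInf_le (hK.image_of_continuousOn hg.continuousOn).bddBelow
      (mem_image_of_mem _ (hdiff s))) t
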